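/- Let 𝔉 and 𝔥 be clonable families of r-graphs. If 𝔉 is 𝔥-locally stable, then 𝔉 is 𝔥-weight locally stable. -/

import Mathlib

open Filter

namespace TuranGT

/-- An `r`-graph: an `r`-uniform hypergraph with vertex set `{0, ..., n-1} ⊆ ℕ`. -/
structure RGraph (r : ℕ) where
  n : ℕ
  edges : Finset (Finset ℕ)
  uniform : ∀ e ∈ edges, e.card = r
  valid : ∀ e ∈ edges, ∀ v ∈ e, v < n

variable {r : ℕ}

/-- The link of a vertex `v`: the set of `(r-1)`-sets `I` with `I ∪ {v}` an edge. -/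
def link (F : RGraph r) (v : ℕ) : Finset (Finset ℕ) :=
  (F.edges.filter fun e => v ∈ e).image fun e => e.erase v

/-- `G` contains a copy of `H` as a subgraph. -/
def ContainsCopy (G H : RGraph r) : Prop :=
  ∃ f : ℕ → ℕ, Set.InjOn f (Set.Iio H.n) ∧ (∀ v < H.n, f v < G.n) ∧
    ∀ e ∈ H.edges, e.image f ∈ G.edges

/-- `G` is `𝔉`-free: it contains no member of `𝔉` as a subgraph. -/
def FreeFam (𝔉 : Set (RGraph r)) (G : RGraph r) : Prop :=
  ∀ H ∈ 𝔉, ¬ ContainsCopy G H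

/-- The Turán number `ex(n, 𝔉)`. -/
noncomputable def exNum (r n : ℕ) (𝔉 : Set (RGraph r)) : ℕ :=
  sSup {k | ∃ G : RGraph r, G.n = n ∧ FreeFam 𝔉 G ∧ G.edges.card = k}

/-- `φ` witnesses that `G` is a blowup of `F`: fibers of `φ` form a blowup partition. -/
def IsBlowupMap (F G : RGraph r) (φ : ℕ → ℕ) : Prop :=
  (∀ v < G.n, φ v < F.n) ∧
    ∀ e : Finset ℕ, e ∈ G.edges ↔
      ((∀ v ∈ e, v < G.n) ∧ Set.InjOn φ (e : Set ℕ) ∧ e.image φ ∈ F.edges)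

/-- `G` is (isomorphic to) a blowup of `F` (cloning and deleting vertices). -/
def IsBlowup (F G : RGraph r) : Prop := ∃ φ : ℕ → ℕ, IsBlowupMap F G φ

/-- The family `𝔅(S)` of all blowups of `S`. -/
def blowupFam (S : RGraph r) : Set (RGraph r) := {G | IsBlowup S G}

/-- A family is clonable if it is closed under taking blowups. -/
def Clonable (𝔉 : Set (RGraph r)) : Prop :=
  ∀ F ∈ 𝔉, ∀ G : RGraph r, IsBlowup F G → G ∈ 𝔉

/-- `m(𝔉, n)`: maximum number of edges of an `n`-vertex member of `𝔉`. -/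
noncomputable def mFam (𝔉 : Set (RGraph r)) (n : ℕ) : ℕ :=
  sSup {k | ∃ F ∈ 𝔉, F.n = n ∧ F.edges.card = k}

/-- `m(𝔉) = lim_{n → ∞} m(𝔉, n)/n^r` (when the family is smooth). -/
noncomputable def mDen (𝔉 : Set (RGraph r)) : ℝ :=
  limUnder atTop fun n : ℕ => (mFam 𝔉 n : ℝ) / (n : ℝ) ^ r

/-- The edit distance `d_𝔥(F)` from `F` to the family `𝔥`. -/
noncomputable def distFam (𝔥 : Set (RGraph r)) (F : RGraph r) : ℝ :=
  sInf {x : ℝ | ∃ H ∈ 𝔥, H.n = F.n ∧ x = ((symmDiff F.edges H.edges).card : ℝ)}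

/-- `μ` is a probability distribution on the vertex set of `F`. -/
def IsWeight (F : RGraph r) (μ : ℕ → ℝ) : Prop :=
  (∀ v, 0 ≤ μ v) ∧ (∀ v, F.n ≤ v → μ v = 0) ∧ ∑ v ∈ Finset.range F.n, μ v = 1

/-- Weighted density `λ(F, μ)`. -/
noncomputable def lamW (F : RGraph r) (μ : ℕ → ℝ) : ℝ :=
  ∑ e ∈ F.edges, ∏ v ∈ e, μ v

/-- The Lagrangian `λ(F)`. -/
noncomputable def lagrangian (F : RGraph r) : ℝ :=
  sSup {x : ℝ | ∃ μ, IsWeight F μ ∧ x = lamW F μ}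

/-- `λ(𝔥)` for a family of r-graphs. -/
noncomputable def lamFam (𝔥 : Set (RGraph r)) : ℝ :=
  sSup {x : ℝ | ∃ H ∈ 𝔥, ∃ μ, IsWeight H μ ∧ x = lamW H μ}

/-- The uniform distribution `ξ_F`. -/
noncomputable def uniformW (F : RGraph r) : ℕ → ℝ :=
  fun v => if v < F.n then ((F.n : ℝ))⁻¹ else 0

/-- `(G, ν)` is a blowup of the weighted graph `(F, μ)`. -/
def WIsBlowup (F : RGraph r) (μ : ℕ → ℝ) (G : RGraph r) (ν : ℕ → ℝ) : Prop :=
  IsWeight G ν ∧ ∃ φ : ℕ → ℕ, IsBlowupMap F G φ ∧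
    ∀ i < F.n, μ i = ∑ v ∈ (Finset.range G.n).filter (fun v => φ v = i), ν v

/-- `d'(F1, F2, μ)` for graphs on a common vertex set. -/
noncomputable def dPrime (E1 E2 : Finset (Finset ℕ)) (μ : ℕ → ℝ) : ℝ :=
  ∑ e ∈ symmDiff E1 E2, ∏ v ∈ e, μ v

/-- The distance between weighted `r`-graphs. -/
noncomputable def wDist (F1 : RGraph r) (μ1 : ℕ → ℝ) (F2 : RGraph r) (μ2 : ℕ → ℝ) : ℝ :=
  sInf {x : ℝ | ∃ (G1 G2 : RGraph r) (ν : ℕ → ℝ), G1.n = G2.n ∧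
    WIsBlowup F1 μ1 G1 ν ∧ WIsBlowup F2 μ2 G2 ν ∧ x = dPrime G1.edges G2.edges ν}

/-- The weighted distance `d^w_𝔥(F, μ)` from a weighted graph to a family. -/
noncomputable def wDistFam (𝔥 : Set (RGraph r)) (F : RGraph r) (μ : ℕ → ℝ) : ℝ :=
  sInf {x : ℝ | ∃ H ∈ 𝔥, ∃ ν, IsWeight H ν ∧ x = wDist F μ H ν}

/-- `𝔉` is `(𝔥, ε, α)`-locally stable. -/
def LocallyStable (𝔉 𝔥 : Set (RGraph r)) (ε α : ℝ) : Prop :=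
  ∃ n0 : ℕ, ∀ F ∈ 𝔉, n0 ≤ F.n → distFam 𝔥 F ≤ ε * (F.n : ℝ) ^ r →
    (F.edges.card : ℝ) ≤ (mFam 𝔥 F.n : ℝ) - α * distFam 𝔥 F

/-- `𝔉` is `𝔥`-locally stable. -/
def HLocallyStable (𝔉 𝔥 : Set (RGraph r)) : Prop :=
  ∃ ε > (0 : ℝ), ∃ α > (0 : ℝ), LocallyStable 𝔉 𝔥 ε α

/-- `𝔉` is `𝔥`-stable, i.e. `(𝔥, 1, α)`-locally stable for some `α > 0`. -/
def HStable (𝔉 𝔥 : Set (RGraph r)) : Prop :=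
  ∃ α > (0 : ℝ), LocallyStable 𝔉 𝔥 1 α

/-- `𝔉` is `(𝔥, ε, α)`-vertex locally stable. -/
def VertexLocallyStable (𝔉 𝔥 : Set (RGraph r)) (ε α : ℝ) : Prop :=
  ∃ n0 : ℕ, ∀ F ∈ 𝔉, n0 ≤ F.n → distFam 𝔥 F ≤ ε * (F.n : ℝ) ^ r →
    (∀ v < F.n, ((r : ℝ) * mDen 𝔥 - ε) * (F.n : ℝ) ^ (r - 1) ≤ ((link F v).card : ℝ)) →
    (F.edges.card : ℝ) ≤ (mFam 𝔥 F.n : ℝ) - α * distFam 𝔥 F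

/-- `𝔉` is `𝔥`-vertex locally stable. -/
def HVertexLocallyStable (𝔉 𝔥 : Set (RGraph r)) : Prop :=
  ∃ ε > (0 : ℝ), ∃ α > (0 : ℝ), VertexLocallyStable 𝔉 𝔥 ε α

/-- `𝔉` is `(𝔥, ε, α)`-weight locally stable. -/
def WeightLocallyStable (𝔉 𝔥 : Set (RGraph r)) (ε α : ℝ) : Prop :=
  ∀ F ∈ 𝔉, ∀ μ : ℕ → ℝ, IsWeight F μ → wDistFam 𝔥 F μ ≤ ε →
    lamW F μ ≤ lamFam 𝔥 - α * wDistFam 𝔥 F μ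

/-- `𝔉` is `𝔥`-weight locally stable. -/
def HWeightLocallyStable (𝔉 𝔥 : Set (RGraph r)) : Prop :=
  ∃ ε > (0 : ℝ), ∃ α > (0 : ℝ), WeightLocallyStable 𝔉 𝔥 ε α

/-- `𝔉` is `𝔥`-weight stable: `(𝔥, 1, α)`-weight locally stable for some `α > 0`. -/
def HWeightStable (𝔉 𝔥 : Set (RGraph r)) : Prop :=
  ∃ α > (0 : ℝ), WeightLocallyStable 𝔉 𝔥 1 α

/-- `𝔉` is `𝔥`-weakly weight stable. -/
def WeaklyWeightStable (𝔉 𝔥 : Set (RGraph r)) : Prop :=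
  ∀ ε > (0 : ℝ), ∃ δ > (0 : ℝ), ∀ F ∈ 𝔉, ∀ μ : ℕ → ℝ, IsWeight F μ →
    lamFam 𝔥 - δ ≤ lamW F μ → wDistFam 𝔥 F μ ≤ ε

/-- The generalized triangle `T_r` on vertex set `{0, ..., 2r-2}` (for `r ≥ 2`),
with edges `D1 = {0,...,r-1}`, `D2 = {0,...,r-2} ∪ {r}`, `D3 = {r-1, r, ..., 2r-2}`. -/
def genTriangle (r : ℕ) : RGraph r where
  n := 2 * r - 1
  edges :=
    if _h : 2 ≤ r then
      {Finset.range r, insert r (Finset.range (r - 1)), Finset.Ico (r - 1) (2 * r - 1)}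
    else ∅
  uniform := by
    intro e he
    split_ifs at he with h
    · simp only [Finset.mem_insert, Finset.mem_singleton] at he
      rcases he with rfl | rfl | rfl
      · exact Finset.card_range r
      · rw [Finset.card_insert_of_notMem (by simp only [Finset.mem_range]; omega),
          Finset.card_range]
        omega
      · rw [Nat.card_Ico]
        omega
    · simp at he
  valid := by
    intro e he v hv
    split_ifs at he with h
    · simp only [Finset.mem_insert, Finset.mem_singleton] at he
      rcases he with rfl | rfl | rfl
      · simp only [Finset.mem_range] at hv; omega
      · simp only [Finset.mem_insert, Finset.mem_range] at hv; omega
      · simp only [Finset.mem_Ico] at hv; omega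
    · simp at he

/-- The family `Σ_r`: all `r`-graphs with three edges `D1, D2, D3` such that
`|D1 ∩ D2| = r - 1` and `D1 △ D2 ⊆ D3`. -/
def SigmaFam (r : ℕ) : Set (RGraph r) :=
  {G | ∃ D1 D2 D3 : Finset ℕ, G.edges = {D1, D2, D3} ∧
    D1 ≠ D2 ∧ D1 ≠ D3 ∧ D2 ≠ D3 ∧
    (D1 ∩ D2).card = r - 1 ∧ symmDiff D1 D2 ⊆ D3}

/-- The complete graph `K_t` as a `2`-graph. -/
def completeGraph (t : ℕ) : RGraph 2 where
  n := t
  edges := Finset.powersetCard 2 (Finset.range t)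
  uniform := fun _e he => (Finset.mem_powersetCard.1 he).2
  valid := fun _e he v hv => Finset.mem_range.1 ((Finset.mem_powersetCard.1 he).1 hv)

/-- `S` is an `(m, r, r-1)` Steiner system: each `(r-1)`-subset of the vertex set
lies in exactly one edge. -/
def IsSteiner (m : ℕ) (S : RGraph r) : Prop :=
  S.n = m ∧ ∀ I : Finset ℕ, (∀ v ∈ I, v < S.n) → I.card = r - 1 →
    ∃! e, e ∈ S.edges ∧ I ⊆ e

/-- `F` covers pairs: every two vertices lie in a common edge. -/
def CoversPairs (F : RGraph r) : Prop :=
  ∀ u < F.n, ∀ v < F.n, ∃ e ∈ F.edges, u ∈ e ∧ v ∈ e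

/-- Isomorphism of `r`-graphs. -/
def Isomorphic (F G : RGraph r) : Prop :=
  F.n = G.n ∧ ∃ f : ℕ → ℕ, Set.InjOn f (Set.Iio F.n) ∧ (∀ v < F.n, f v < G.n) ∧
    ∀ e : Finset ℕ, e ∈ F.edges ↔ ((∀ v ∈ e, v < F.n) ∧ e.image f ∈ G.edges)

/-- The support of a weighting. -/
noncomputable def suppW (F : RGraph r) (μ : ℕ → ℝ) : Finset ℕ :=
  (Finset.range F.n).filter fun v => μ v ≠ 0

/-- `G` is isomorphic to the subgraph of `F` induced on the vertex set `S`. -/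
def IsIsoInduced (F : RGraph r) (S : Finset ℕ) (G : RGraph r) : Prop :=
  ∃ f : ℕ → ℕ, Set.InjOn f (Set.Iio G.n) ∧ (Finset.range G.n).image f = S ∧
    ∀ e : Finset ℕ, e ∈ G.edges ↔ ((∀ v ∈ e, v < G.n) ∧ e.image f ∈ F.edges)

/-- An `r`-graph is thin if every `(r-1)`-set lies in at most one edge. -/
def ThinG (F : RGraph r) : Prop :=
  ∀ I : Finset ℕ, I.card = r - 1 → ∀ e1 ∈ F.edges, ∀ e2 ∈ F.edges,
    I ⊆ e1 → I ⊆ e2 → e1 = e2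

/-- A Steiner system (or any graph) is balanced if its Lagrangian is attained by
the uniform distribution. -/
def Balanced (F : RGraph r) : Prop := lagrangian F = lamW F (uniformW F)

/-- `e(m, r) = C(m, r-1) / (r m^r)`. -/
noncomputable def eDen (m r : ℕ) : ℝ :=
  (m.choose (r - 1) : ℝ) / ((r : ℝ) * (m : ℝ) ^ r)

/-- `d(m, r) = C(m-1, r-2) / ((r-1) m^{r-1})`. -/
noncomputable def dDen (m r : ℕ) : ℝ :=
  ((m - 1).choose (r - 2) : ℝ) / (((r : ℝ) - 1) * (m : ℝ) ^ (r - 1))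

/-- `S` is uniquely dense around `Σ_r`: the uniform weighting of `S` strictly maximizes the
weighted density among weighted `Σ_r`-free `r`-graphs covering pairs. -/
def UniquelyDense (S : RGraph r) : Prop :=
  (∀ F : RGraph r, FreeFam (SigmaFam r) F → CoversPairs F → ∀ μ : ℕ → ℝ, IsWeight F μ →
    lamW F μ ≤ lamW S (uniformW S)) ∧
  ∀ F : RGraph r, FreeFam (SigmaFam r) F → CoversPairs F → ∀ μ : ℕ → ℝ, IsWeight F μ →
    lamW F μ = lamW S (uniformW S) → Isomorphic F S ∧ μ = uniformW F

/-!
Let `F ∈ 𝔉` carry a weight `μ` with `d := d^w_𝔥(F, μ)` small. Choose `H ∈ 𝔥` with a weight `ν`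
and a common weighted blowup `(G₁, w)`, `(G₂, w)` of `(F, μ)` and `(H, ν)` with
`d'(G₁, G₂, w) ≈ d`. Cloning each vertex `v` into about `w v * n` copies turns `G₁` and `G₂` into
a member of `𝔉` and a member of `𝔥` on `N ≈ n` vertices, at edit distance about
`d'(G₁, G₂, w) n ^ r ≤ ε N ^ r`, so local stability applies to the first one. Spreading `w v`
evenly over the copies of `v` gives a weight bounded by `1 / n`; hence the first graph has at least
`λ(F, μ) n ^ r` edges and is at edit distance at least `d n ^ r` from `𝔥`, while
`m(𝔥, N) ≤ λ(𝔥) N ^ r`. Thus `(λ(F, μ) + α d) n ^ r ≤ λ(𝔥) N ^ r`, and `N / n → 1`.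

If no member of `𝔥` has a vertex, then `λ(𝔥) = d = 0`, and the same argument applied to a large
blowup of `F` shows that `F` has no edges.
-/

open Finset

namespace RGraph

open Classical in
/-- The blowup of `F` on the vertices `0, ..., n - 1` in which `k` is a clone of `φ k`. -/
noncomputable def comap (F : RGraph r) (n : ℕ) (φ : ℕ → ℕ) : RGraph r where
  n := n
  edges := (range n).powerset.filter fun e => Set.InjOn φ e ∧ e.image φ ∈ F.edges
  uniform e he := by
    rw [mem_filter] at he
    rw [← card_image_of_injOn he.2.1]
    exact F.uniform _ he.2.2
  valid e he v hv := mem_range.1 (mem_powerset.1 (mem_filter.1 he).1 hv)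

@[simp] theorem comap_n (F : RGraph r) (n : ℕ) (φ : ℕ → ℕ) : (F.comap n φ).n = n := rfl

theorem mem_comap_edges {F : RGraph r} {n : ℕ} {φ : ℕ → ℕ} {e : Finset ℕ} :
    e ∈ (F.comap n φ).edges ↔
      (∀ v ∈ e, v < n) ∧ Set.InjOn φ e ∧ e.image φ ∈ F.edges := by
  simp only [comap, mem_filter, mem_powerset, subset_iff, mem_range]

def symmDiff (F G : RGraph r) : RGraph r where
  n := max F.n G.n
  edges := _root_.symmDiff F.edges G.edges
  uniform e he := by
    rcases mem_symmDiff.1 he with ⟨he, -⟩ | ⟨he, -⟩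
    exacts [F.uniform e he, G.uniform e he]
  valid e he v hv := by
    rcases mem_symmDiff.1 he with ⟨he, -⟩ | ⟨he, -⟩
    exacts [lt_max_of_lt_left (F.valid e he v hv), lt_max_of_lt_right (G.valid e he v hv)]

theorem comap_symmDiff (F G : RGraph r) (n : ℕ) (φ : ℕ → ℕ) :
    ((F.symmDiff G).comap n φ).edges =
      _root_.symmDiff (F.comap n φ).edges (G.comap n φ).edges := by
  ext e
  simp only [mem_comap_edges, symmDiff, mem_symmDiff]
  tauto

end RGraph

open RGraph

theorem isBlowupMap_comap {F : RGraph r} {n : ℕ} {φ : ℕ → ℕ} (hφ : ∀ k < n, φ k < F.n) :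
    IsBlowupMap F (F.comap n φ) φ :=
  ⟨hφ, fun _ => mem_comap_edges⟩

theorem isBlowupMap_id (G : RGraph r) : IsBlowupMap G G id :=
  ⟨fun _ hv => hv, fun e => by
    simp only [image_id]
    exact ⟨fun he => ⟨G.valid e he, Set.injOn_id _, he⟩, fun h => h.2.2⟩⟩

theorem IsBlowupMap.comp {F G G' : RGraph r} {φ ψ : ℕ → ℕ} (hφ : IsBlowupMap F G φ)
    (hψ : IsBlowupMap G G' ψ) : IsBlowupMap F G' (φ ∘ ψ) := by
  classical
  refine ⟨fun v hv => hφ.1 _ (hψ.1 v hv), fun e => ?_⟩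
  rw [hψ.2, hφ.2, image_image, coe_image]
  constructor
  · rintro ⟨he, hψe, -, hφe, hF⟩
    exact ⟨he, hφe.comp hψe (Set.mapsTo_image _ _), hF⟩
  · rintro ⟨he, hinj, hF⟩
    refine ⟨he, hinj.of_comp, ?_, hinj.image_of_comp, hF⟩
    simp only [mem_image]
    rintro _ ⟨v, hv, rfl⟩
    exact hψ.1 v (he v hv)

theorem image_image_attach_of_leftInverse {φ : ℕ → ℕ} {E : Finset ℕ} {p : ∀ i ∈ E, ℕ}
    (hp : ∀ i hi, φ (p i hi) = i) : ((E.attach.image fun x => p x.1 x.2).image φ) = E := by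
  ext i
  simp only [image_image, mem_image, mem_attach, true_and, Function.comp, hp]
  exact ⟨fun ⟨x, hx⟩ => hx ▸ x.2, fun hi => ⟨⟨i, hi⟩, rfl⟩⟩

theorem injOn_image_attach_of_leftInverse {φ : ℕ → ℕ} {E : Finset ℕ} {p : ∀ i ∈ E, ℕ}
    (hp : ∀ i hi, φ (p i hi) = i) : Set.InjOn φ (E.attach.image fun x => p x.1 x.2) := by
  simp only [coe_image, Set.InjOn, Set.mem_image, mem_coe, mem_attach, true_and]
  rintro _ ⟨x, rfl⟩ _ ⟨y, rfl⟩ hxy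
  rw [hp, hp] at hxy
  rw [Subtype.ext hxy]

/-- Expanding the product of the fibre sums over `E` gives one term for each edge of the blowup
lying over `E`, namely the image of a choice of one vertex in each fibre. -/
theorem IsBlowupMap.sum_prod_eq_prod_sum {F G : RGraph r} {φ : ℕ → ℕ}
    (hb : IsBlowupMap F G φ) {E : Finset ℕ} (hE : E ∈ F.edges) (ν : ℕ → ℝ) :
    ∑ e ∈ G.edges with e.image φ = E, ∏ v ∈ e, ν v =
      ∏ i ∈ E, ∑ v ∈ range G.n with φ v = i, ν v := by
  classical
  rw [prod_sum]
  symm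
  have hpi : ∀ p ∈ E.pi fun i => {v ∈ range G.n | φ v = i}, ∀ i hi,
      p i hi < G.n ∧ φ (p i hi) = i := fun p hp i hi => by simpa using mem_pi.1 hp i hi
  refine sum_bij (fun p _ => E.attach.image fun x => p x.1 x.2) (fun p hp => ?_) ?_ ?_ ?_
  · have hφ : ∀ i hi, φ (p i hi) = i := fun i hi => (hpi p hp i hi).2
    have himage := image_image_attach_of_leftInverse hφ
    refine mem_filter.2 ⟨(hb.2 _).2 ⟨?_, injOn_image_attach_of_leftInverse hφ,
      by rwa [himage]⟩, himage⟩
    simp only [mem_image, mem_attach, true_and]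
    rintro _ ⟨x, rfl⟩
    exact (hpi p hp x.1 x.2).1
  · intro p hp q hq hpq
    funext i hi
    have hpq' : p i hi ∈ E.attach.image fun x => q x.1 x.2 :=
      hpq ▸ mem_image_of_mem (fun x : E => p x.1 x.2) (mem_attach _ ⟨i, hi⟩)
    obtain ⟨⟨j, hj⟩, -, hqj⟩ := mem_image.1 hpq'
    obtain rfl : j = i := by rw [← (hpi q hq j hj).2, hqj, (hpi p hp i hi).2]
    exact hqj.symm
  · intro e he
    obtain ⟨heG, himage⟩ := mem_filter.1 he
    obtain ⟨hlt, hinj, -⟩ := (hb.2 e).1 heG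
    have hsec : ∀ i ∈ E, ∃ v ∈ e, φ v = i := fun i hi => by
      rw [← himage] at hi
      simpa using hi
    choose p hpe hpφ using hsec
    refine ⟨p, mem_pi.2 fun i hi => ?_, ?_⟩
    · simpa [hpφ i hi] using hlt _ (hpe i hi)
    · ext v
      simp only [mem_image, mem_attach, true_and]
      refine ⟨fun ⟨x, hx⟩ => hx ▸ hpe x.1 x.2, fun hv => ?_⟩
      have hi : φ v ∈ E := himage ▸ mem_image_of_mem φ hv
      exact ⟨⟨φ v, hi⟩, hinj (hpe _ hi) hv (hpφ _ hi)⟩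
  · intro p hp
    have hφ : ∀ i hi, φ (p i hi) = i := fun i hi => (hpi p hp i hi).2
    rw [prod_image fun x _ y _ hxy => Subtype.ext (by rw [← hφ x.1 x.2, ← hφ y.1 y.2, hxy])]

theorem IsBlowupMap.lamW_eq {F G : RGraph r} {φ : ℕ → ℕ} (hb : IsBlowupMap F G φ)
    (ν : ℕ → ℝ) : lamW G ν = lamW F fun i => ∑ v ∈ range G.n with φ v = i, ν v := by
  classical
  rw [lamW, lamW, ← sum_fiberwise_of_maps_to (g := fun e => e.image φ)
    fun e he => ((hb.2 e).1 he).2.2]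
  exact sum_congr rfl fun E hE => hb.sum_prod_eq_prod_sum hE ν

theorem IsBlowupMap.card_edges {F G : RGraph r} {φ : ℕ → ℕ} (hb : IsBlowupMap F G φ) :
    (#G.edges : ℝ) = lamW F fun i => (#{v ∈ range G.n | φ v = i} : ℝ) := by
  simpa [lamW] using hb.lamW_eq fun _ => 1

theorem IsWeight.n_pos {F : RGraph r} {μ : ℕ → ℝ} (h : IsWeight F μ) : 0 < F.n := by
  by_contra! hn
  simpa [Nat.le_zero.1 hn] using h.2.2

theorem IsWeight.le_one {F : RGraph r} {μ : ℕ → ℝ} (h : IsWeight F μ) (v : ℕ) : μ v ≤ 1 := by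
  by_cases hv : v < F.n
  · exact h.2.2 ▸ single_le_sum (fun i _ => h.1 i) (mem_range.2 hv)
  · simp [h.2.1 v (not_lt.1 hv)]

theorem IsWeight.of_n_eq {F G : RGraph r} {μ : ℕ → ℝ} (h : IsWeight F μ) (hn : G.n = F.n) :
    IsWeight G μ := by
  unfold IsWeight
  rwa [hn]

theorem WIsBlowup.isBlowup {F G : RGraph r} {μ ν : ℕ → ℝ} (h : WIsBlowup F μ G ν) :
    IsBlowup F G :=
  let ⟨_, φ, hφ, _⟩ := h
  ⟨φ, hφ⟩

theorem WIsBlowup.refl {G : RGraph r} {ν : ℕ → ℝ} (hν : IsWeight G ν) : WIsBlowup G ν G ν :=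
  ⟨hν, id, isBlowupMap_id G, fun i hi => by simp [hi]⟩

theorem sum_filter_comp_eq_sum_sum {ι κ M : Type*} [AddCommMonoid M] [DecidableEq κ]
    {s : Finset ι} {t : Finset κ} {ψ : ι → κ} (hψ : ∀ k ∈ s, ψ k ∈ t) (p : κ → Prop)
    [DecidablePred p] (f : ι → M) :
    ∑ k ∈ s with p (ψ k), f k = ∑ v ∈ t with p v, ∑ k ∈ s with ψ k = v, f k := by
  rw [← sum_fiberwise_of_maps_to (g := ψ) (t := {v ∈ t | p v})
    fun k hk => mem_filter.2 ⟨hψ k (mem_filter.1 hk).1, (mem_filter.1 hk).2⟩]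
  refine sum_congr rfl fun v hv => ?_
  rw [filter_filter]
  exact sum_congr (filter_congr fun k _ => ⟨And.right, fun h => ⟨h ▸ (mem_filter.1 hv).2, h⟩⟩)
    fun _ _ => rfl

theorem WIsBlowup.trans {F G G' : RGraph r} {μ ν ρ : ℕ → ℝ} (h : WIsBlowup F μ G ν)
    (h' : WIsBlowup G ν G' ρ) : WIsBlowup F μ G' ρ := by
  obtain ⟨-, φ, hφ, hμ⟩ := h
  obtain ⟨hρ, ψ, hψ, hν⟩ := h'
  refine ⟨hρ, φ ∘ ψ, hφ.comp hψ, fun i hi => ?_⟩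
  rw [hμ i hi]
  calc _ = ∑ v ∈ range G.n with φ v = i, ∑ k ∈ range G'.n with ψ k = v, ρ k :=
        sum_congr rfl fun v hv => hν v (mem_range.1 (mem_filter.1 hv).1)
    _ = _ := (sum_filter_comp_eq_sum_sum
        (fun k hk => mem_range.2 (hψ.1 k (mem_range.1 hk))) (φ · = i) ρ).symm

theorem WIsBlowup.lamW_eq {F G : RGraph r} {μ ρ : ℕ → ℝ} (hw : WIsBlowup F μ G ρ) :
    lamW G ρ = lamW F μ := by
  obtain ⟨-, φ, hφ, hμ⟩ := hw
  rw [hφ.lamW_eq]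
  exact sum_congr rfl fun e he => prod_congr rfl fun i hi => (hμ i (F.valid e he i hi)).symm

theorem lamW_nonneg (F : RGraph r) {μ : ℕ → ℝ} (hμ : ∀ v, 0 ≤ μ v) : 0 ≤ lamW F μ :=
  sum_nonneg fun _ _ => prod_nonneg fun v _ => hμ v

theorem lamW_le_card_mul_pow (F : RGraph r) {ρ : ℕ → ℝ} {t : ℝ} (h0 : ∀ v, 0 ≤ ρ v)
    (ht : ∀ v, ρ v ≤ t) : lamW F ρ ≤ #F.edges * t ^ r := by
  rw [← nsmul_eq_mul]
  refine sum_le_card_nsmul _ _ _ fun e he => ?_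
  rw [← F.uniform e he, ← prod_const]
  exact prod_le_prod (fun v _ => h0 v) fun v _ => ht v

theorem lamW_const_mul (F : RGraph r) (c : ℝ) (f : ℕ → ℝ) :
    lamW F (fun v => c * f v) = c ^ r * lamW F f := by
  rw [lamW, lamW, mul_sum]
  exact sum_congr rfl fun e he => by rw [prod_mul_distrib, prod_const, F.uniform e he]

theorem prod_le_prod_add_card_mul {ι : Type*} (s : Finset ι) {f g : ι → ℝ} {η : ℝ}
    (hη : 0 ≤ η) (hf : ∀ i ∈ s, 0 ≤ f i ∧ f i ≤ 1) (hg : ∀ i ∈ s, 0 ≤ g i ∧ g i ≤ 1)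
    (hfg : ∀ i ∈ s, f i ≤ g i + η) : ∏ i ∈ s, f i ≤ ∏ i ∈ s, g i + #s * η := by
  classical
  induction s using Finset.cons_induction with
  | empty => simp
  | cons a s ha ih =>
    simp only [forall_mem_cons] at hf hg hfg
    have ih := ih hf.2 hg.2 hfg.2
    have hg1 : ∏ i ∈ s, g i ≤ 1 := prod_le_one (fun i hi => (hg.2 i hi).1) fun i hi => (hg.2 i hi).2
    have hg0 : 0 ≤ ∏ i ∈ s, g i := prod_nonneg fun i hi => (hg.2 i hi).1
    rw [prod_cons, prod_cons, card_cons, Nat.cast_succ]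
    calc f a * ∏ i ∈ s, f i ≤ f a * (∏ i ∈ s, g i + #s * η) := by gcongr; exact hf.1.1
      _ ≤ f a * ∏ i ∈ s, g i + #s * η := by
          rw [mul_add]
          linarith [mul_le_of_le_one_left (by positivity : (0 : ℝ) ≤ #s * η) hf.1.2]
      _ ≤ (g a + η) * ∏ i ∈ s, g i + #s * η := by gcongr; exact hfg.1
      _ ≤ g a * ∏ i ∈ s, g i + (#s + 1) * η := by nlinarith

theorem lamW_le_lamW_add (F : RGraph r) {f g : ℕ → ℝ} {η : ℝ} (hη : 0 ≤ η)
    (hf : ∀ v < F.n, 0 ≤ f v ∧ f v ≤ 1) (hg : ∀ v < F.n, 0 ≤ g v ∧ g v ≤ 1)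
    (hfg : ∀ v < F.n, f v ≤ g v + η) : lamW F f ≤ lamW F g + #F.edges * r * η := by
  rw [lamW, lamW, mul_assoc, ← nsmul_eq_mul, ← sum_const, ← sum_add_distrib]
  refine sum_le_sum fun e he => ?_
  have hv := F.valid e he
  rw [← F.uniform e he]
  exact prod_le_prod_add_card_mul e hη (fun v hv' => hf v (hv v hv'))
    (fun v hv' => hg v (hv v hv')) fun v hv' => hfg v (hv v hv')

theorem lamW_le_exp_one {F : RGraph r} {μ : ℕ → ℝ} (hμ : IsWeight F μ) :
    lamW F μ ≤ Real.exp 1 :=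
  calc lamW F μ ≤ ∑ e ∈ (range F.n).powerset, ∏ v ∈ e, μ v :=
        sum_le_sum_of_subset_of_nonneg
          (fun e he => mem_powerset.2 fun v hv => mem_range.2 (F.valid e he v hv))
          fun e _ _ => prod_nonneg fun v _ => hμ.1 v
    _ = ∏ v ∈ range F.n, (μ v + 1) := (prod_add_one _).symm
    _ ≤ ∏ v ∈ range F.n, Real.exp (μ v) :=
        prod_le_prod (fun v _ => by linarith [hμ.1 v]) fun v _ => Real.add_one_le_exp _
    _ = Real.exp 1 := by rw [← Real.exp_sum, hμ.2.2]

theorem lamW_le_lamFam {𝔥 : Set (RGraph r)} {H : RGraph r} (hH : H ∈ 𝔥) {μ : ℕ → ℝ}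
    (hμ : IsWeight H μ) : lamW H μ ≤ lamFam 𝔥 :=
  le_csSup ⟨Real.exp 1, by rintro _ ⟨H, -, μ, hμ, rfl⟩; exact lamW_le_exp_one hμ⟩
    ⟨H, hH, μ, hμ, rfl⟩

theorem lamFam_nonneg (𝔥 : Set (RGraph r)) : 0 ≤ lamFam 𝔥 :=
  Real.sSup_nonneg <| by rintro _ ⟨H, -, μ, hμ, rfl⟩; exact lamW_nonneg H hμ.1

theorem isWeight_uniformW {F : RGraph r} (hn : 0 < F.n) : IsWeight F (uniformW F) := by
  refine ⟨fun v => ?_, fun v hv => if_neg (not_lt.2 hv), ?_⟩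
  · unfold uniformW; split_ifs <;> positivity
  · simp only [uniformW]
    rw [sum_congr rfl fun v hv => if_pos (mem_range.1 hv)]
    simp [hn.ne']

theorem lamW_uniformW (F : RGraph r) : lamW F (uniformW F) = #F.edges * (F.n : ℝ)⁻¹ ^ r := by
  rw [lamW, ← nsmul_eq_mul, ← sum_const]
  refine sum_congr rfl fun e he => ?_
  simp only [uniformW]
  rw [prod_congr rfl fun v hv => if_pos (F.valid e he v hv), prod_const, F.uniform e he]

theorem mFam_le_lamFam_mul_pow (𝔥 : Set (RGraph r)) {N : ℕ} (hN : 0 < N) :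
    (mFam 𝔥 N : ℝ) ≤ lamFam 𝔥 * N ^ r := by
  set S := {k | ∃ H ∈ 𝔥, H.n = N ∧ #H.edges = k} with hS_def
  rcases S.eq_empty_or_nonempty with hS | hS
  · rw [mFam, ← hS_def, hS, csSup_empty, bot_eq_zero, Nat.cast_zero]
    exact mul_nonneg (lamFam_nonneg 𝔥) (by positivity)
  have hbdd : BddAbove S := ⟨2 ^ N, by
    rintro _ ⟨H, -, rfl, rfl⟩
    calc #H.edges ≤ #(range H.n).powerset := card_le_card fun e he =>
            mem_powerset.2 fun v hv => mem_range.2 (H.valid e he v hv)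
      _ = 2 ^ H.n := by simp⟩
  obtain ⟨H, hH, rfl, hcard⟩ := Nat.sSup_mem hS hbdd
  have hlam := lamW_le_lamFam hH (isWeight_uniformW hN)
  rw [lamW_uniformW, inv_pow, ← div_eq_mul_inv, div_le_iff₀ (by positivity)] at hlam
  rwa [mFam, ← hcard]

theorem sum_range_mul_div_mod {β : Type*} [AddCommMonoid β] (M K : ℕ) (g : ℕ → ℕ → β) :
    ∑ k ∈ range (M * K), g (k / K) (k % K) = ∑ i ∈ range M, ∑ j ∈ range K, g i j := by
  rw [sum_range, ← finProdFinEquiv.sum_comp, Fintype.sum_prod_type, ← Fin.sum_univ_eq_sum_range]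
  refine sum_congr rfl fun i _ => ?_
  rw [← Fin.sum_univ_eq_sum_range]
  refine sum_congr rfl fun j _ => ?_
  have hj := j.isLt
  simp only [finProdFinEquiv_apply_val]
  rw [Nat.add_mul_div_left _ _ (by omega), Nat.add_mul_mod_self_left, Nat.div_eq_of_lt hj,
    Nat.mod_eq_of_lt hj, zero_add]

/-- The product weight `μ i * ν j` on pairs `(i, j)` refines both weights. -/
theorem exists_common_wIsBlowup {F H : RGraph r} {μ ν : ℕ → ℝ} (hμ : IsWeight F μ)
    (hν : IsWeight H ν) : ∃ (G₁ G₂ : RGraph r) (w : ℕ → ℝ),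
      G₁.n = G₂.n ∧ WIsBlowup F μ G₁ w ∧ WIsBlowup H ν G₂ w := by
  have hK : 0 < H.n := hν.n_pos
  have hw : IsWeight (F.comap (F.n * H.n) (· / H.n)) fun k => μ (k / H.n) * ν (k % H.n) := by
    refine ⟨fun k => mul_nonneg (hμ.1 _) (hν.1 _), fun k hk => ?_, ?_⟩
    · rw [comap_n, ← Nat.le_div_iff_mul_le hK] at hk
      simp [hμ.2.1 _ hk]
    · rw [comap_n, sum_range_mul_div_mod F.n H.n fun i j => μ i * ν j]
      simp [← mul_sum, hν.2.2, hμ.2.2]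
  refine ⟨F.comap (F.n * H.n) (· / H.n), H.comap (F.n * H.n) (· % H.n), _, rfl,
    ⟨hw, _, isBlowupMap_comap fun k hk => Nat.div_lt_of_lt_mul (by rwa [mul_comm]),
      fun i hi => ?_⟩,
    ⟨hw.of_n_eq rfl, _, isBlowupMap_comap fun k _ => Nat.mod_lt k hK, fun j hj => ?_⟩⟩
  · rw [comap_n, sum_filter,
      sum_range_mul_div_mod F.n H.n fun a b => if a = i then μ a * ν b else 0]
    simp [← mul_sum, hν.2.2, hi]
  · rw [comap_n, sum_filter,
      sum_range_mul_div_mod F.n H.n fun a b => if b = j then μ a * ν b else 0]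
    simp [← sum_mul, hμ.2.2, hj]

theorem wDist_nonneg (F₁ : RGraph r) (μ₁ : ℕ → ℝ) (F₂ : RGraph r) (μ₂ : ℕ → ℝ) :
    0 ≤ wDist F₁ μ₁ F₂ μ₂ :=
  Real.sInf_nonneg <| by
    rintro _ ⟨G₁, G₂, ν, -, hw, -, rfl⟩
    exact lamW_nonneg (G₁.symmDiff G₂) hw.1.1

theorem wDist_le_dPrime {F₁ F₂ G₁ G₂ : RGraph r} {μ₁ μ₂ ν : ℕ → ℝ} (h₁ : WIsBlowup F₁ μ₁ G₁ ν)
    (h₂ : WIsBlowup F₂ μ₂ G₂ ν) (hn : G₁.n = G₂.n) :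
    wDist F₁ μ₁ F₂ μ₂ ≤ dPrime G₁.edges G₂.edges ν :=
  csInf_le ⟨0, by rintro _ ⟨G₁, G₂, ν, -, hw, -, rfl⟩; exact lamW_nonneg (G₁.symmDiff G₂) hw.1.1⟩
    ⟨G₁, G₂, ν, hn, h₁, h₂, rfl⟩

theorem wDistFam_le_wDist {𝔥 : Set (RGraph r)} {H : RGraph r} (hH : H ∈ 𝔥) {ν : ℕ → ℝ}
    (hν : IsWeight H ν) (F : RGraph r) (μ : ℕ → ℝ) : wDistFam 𝔥 F μ ≤ wDist F μ H ν :=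
  csInf_le ⟨0, by rintro _ ⟨H, -, ν, -, rfl⟩; exact wDist_nonneg F μ H ν⟩ ⟨H, hH, ν, hν, rfl⟩

theorem distFam_le_card_symmDiff {𝔥 : Set (RGraph r)} {G H : RGraph r} (hH : H ∈ 𝔥)
    (hn : H.n = G.n) : distFam 𝔥 G ≤ #(symmDiff G.edges H.edges) :=
  csInf_le ⟨0, by rintro _ ⟨H, -, -, rfl⟩; positivity⟩ ⟨H, hH, hn, rfl⟩

theorem exists_dPrime_lt_wDistFam_add {𝔥 : Set (RGraph r)} {F H₀ : RGraph r} {μ ν₀ : ℕ → ℝ}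
    (hμ : IsWeight F μ) (hH₀ : H₀ ∈ 𝔥) (hν₀ : IsWeight H₀ ν₀) {δ : ℝ} (hδ : 0 < δ) :
    ∃ H ∈ 𝔥, ∃ (ν : ℕ → ℝ) (G₁ G₂ : RGraph r) (w : ℕ → ℝ), G₁.n = G₂.n ∧
      WIsBlowup F μ G₁ w ∧ WIsBlowup H ν G₂ w ∧
      dPrime G₁.edges G₂.edges w < wDistFam 𝔥 F μ + δ := by
  have hwDistFam := lt_add_of_pos_right (wDistFam 𝔥 F μ) (half_pos hδ)
  nth_rw 1 [wDistFam] at hwDistFam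
  obtain ⟨_, ⟨H, hH, ν, hν, rfl⟩, hlt⟩ :=
    exists_lt_of_csInf_lt (by exact ⟨_, H₀, hH₀, ν₀, hν₀, rfl⟩) hwDistFam
  obtain ⟨G₁, G₂, w, hn, hw₁, hw₂⟩ := exists_common_wIsBlowup hμ hν
  have hwDist := lt_add_of_pos_right (wDist F μ H ν) (half_pos hδ)
  nth_rw 1 [wDist] at hwDist
  obtain ⟨_, ⟨G₁, G₂, w, hn, hw₁, hw₂, rfl⟩, hlt'⟩ :=
    exists_lt_of_csInf_lt (by exact ⟨_, G₁, G₂, w, hn, hw₁, hw₂, rfl⟩) hwDist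
  refine ⟨H, hH, ν, G₁, G₂, w, hn, hw₁, hw₂, ?_⟩
  linarith

theorem wDistFam_le_pow_mul_distFam {𝔥 : Set (RGraph r)} {F G : RGraph r} {μ ρ : ℕ → ℝ}
    (hw : WIsBlowup F μ G ρ) {t : ℝ} (hρ : ∀ v, ρ v ≤ t) (h𝔥 : ∃ H ∈ 𝔥, H.n = G.n) :
    wDistFam 𝔥 F μ ≤ t ^ r * distFam 𝔥 G := by
  have ht : 0 ≤ t := (hw.1.1 0).trans (hρ 0)
  rw [distFam, ← smul_eq_mul, ← Real.sInf_smul_of_nonneg (pow_nonneg ht r)]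
  obtain ⟨H₀, hH₀, hn₀⟩ := h𝔥
  refine le_csInf ⟨_, _, ⟨H₀, hH₀, hn₀, rfl⟩, rfl⟩ ?_
  rintro _ ⟨_, ⟨H, hH, hn, rfl⟩, rfl⟩
  have hρH : IsWeight H ρ := hw.1.of_n_eq hn
  calc wDistFam 𝔥 F μ ≤ wDist F μ H ρ := wDistFam_le_wDist hH hρH F μ
    _ ≤ lamW (G.symmDiff H) ρ := wDist_le_dPrime hw (.refl hρH) hn.symm
    _ ≤ #(symmDiff G.edges H.edges) * t ^ r := lamW_le_card_mul_pow _ hw.1.1 hρ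
    _ = _ := mul_comm _ _

theorem exists_card_fiber_eq (c : ℕ → ℕ) (m : ℕ) :
    ∃ ψ : ℕ → ℕ, (∀ k < ∑ v ∈ range m, c v, ψ k < m) ∧
      ∀ v < m, #{k ∈ range (∑ v ∈ range m, c v) | ψ k = v} = c v := by
  induction m with
  | zero => simp
  | succ m ih =>
    obtain ⟨ψ, hψ, hcard⟩ := ih
    set N := ∑ v ∈ range m, c v
    refine ⟨fun k => if k < N then ψ k else m, fun k hk => ?_, fun v hv => ?_⟩
    · dsimp only
      split_ifs with h
      exacts [(hψ k h).trans (Nat.lt_succ_self m), Nat.lt_succ_self m]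
    rw [sum_range_succ]
    rcases (Nat.lt_succ_iff_lt_or_eq.1 hv) with hv | rfl
    · rw [← hcard v hv]
      congr 1
      ext k
      simp only [mem_filter, mem_range]
      constructor
      · rintro ⟨-, hk⟩
        split_ifs at hk with h
        exacts [⟨h, hk⟩, absurd hk hv.ne']
      · rintro ⟨hk, rfl⟩
        exact ⟨by omega, if_pos hk⟩
    · have hfiber : {k ∈ range (N + c v) | (if k < N then ψ k else v) = v} = Ico N (N + c v) := by
        ext k
        simp only [mem_filter, mem_range, mem_Ico]
        constructor
        · rintro ⟨hk, hkv⟩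
          split_ifs at hkv with h
          exacts [absurd hkv (hψ k h).ne, ⟨not_lt.1 h, hk⟩]
        · rintro ⟨h₁, h₂⟩
          exact ⟨h₂, if_neg (not_lt.2 h₁)⟩
      rw [hfiber, Nat.card_Ico, Nat.add_sub_cancel_left]

/-- A discretization at scale `n` of a weight `w` on `m` vertices: a map `ψ` from `N ≥ n` vertices
onto the `m` old ones whose fibres have about `w v * n` elements, together with a weight `ρ ≤ 1/n`
whose fibre sums recover `w`. -/
structure Discretization (m n : ℕ) (w : ℕ → ℝ) where
  N : ℕ
  ψ : ℕ → ℕ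
  ρ : ℕ → ℝ
  ψ_lt : ∀ k < N, ψ k < m
  le_N : n ≤ N
  N_le : N ≤ n + m
  ρ_nonneg : ∀ k, 0 ≤ ρ k
  ρ_le : ∀ k, ρ k ≤ (n : ℝ)⁻¹
  ρ_eq_zero : ∀ k, N ≤ k → ρ k = 0
  sum_fiber_ρ : ∀ v < m, ∑ k ∈ range N with ψ k = v, ρ k = w v
  card_fiber_le : ∀ v < m, (#{k ∈ range N | ψ k = v} : ℝ) ≤ w v * n + 1

/-- The fibre of `v` gets `⌊w v * n⌋ + 1` vertices, each carrying an equal share of `w v`. -/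
theorem Discretization.nonempty {m n : ℕ} {w : ℕ → ℝ} (hw₀ : ∀ v, 0 ≤ w v)
    (hw : ∑ v ∈ range m, w v = 1) (hn : 0 < n) : Nonempty (Discretization m n w) := by
  set c : ℕ → ℕ := fun v => ⌊w v * n⌋₊ + 1
  have hc_lb : ∀ v, w v * n ≤ c v := fun v => by
    simpa [c] using (Nat.lt_floor_add_one (w v * n)).le
  have hc_ub : ∀ v, (c v : ℝ) ≤ w v * n + 1 := fun v => by
    simpa [c] using Nat.floor_le (mul_nonneg (hw₀ v) n.cast_nonneg)
  have hc_pos : ∀ v, (0 : ℝ) < c v := fun v => by positivity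
  obtain ⟨ψ, hψ, hcard⟩ := exists_card_fiber_eq c m
  set N := ∑ v ∈ range m, c v
  have hwn : ∑ v ∈ range m, w v * n = n := by rw [← sum_mul, hw, one_mul]
  have hN : (N : ℝ) = ∑ v ∈ range m, (c v : ℝ) := by push_cast [N]; rfl
  refine ⟨⟨N, ψ, fun k => if k < N then w (ψ k) / c (ψ k) else 0, hψ, ?_, ?_, fun k => ?_,
    fun k => ?_, fun k hk => if_neg (not_lt.2 hk), fun v hv => ?_, fun v hv => ?_⟩⟩
  · exact_mod_cast hwn ▸ hN ▸ sum_le_sum fun v _ => hc_lb v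
  · have := hN ▸ sum_le_sum fun v (_ : v ∈ range m) => hc_ub v
    rw [sum_add_distrib, hwn] at this
    exact_mod_cast (by simpa using this : (N : ℝ) ≤ n + m)
  · split_ifs
    exacts [div_nonneg (hw₀ _) (hc_pos _).le, le_rfl]
  · split_ifs
    · rw [div_le_iff₀ (hc_pos _), inv_mul_eq_div, le_div_iff₀ (by positivity)]
      exact hc_lb _
    · positivity
  · rw [sum_congr rfl fun k hk => by rw [if_pos (mem_range.1 (mem_filter.1 hk).1),
      (mem_filter.1 hk).2], sum_const, hcard v hv, nsmul_eq_mul, mul_div_cancel₀ _ (hc_pos v).ne']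
  · exact hcard v hv ▸ hc_ub v

namespace Discretization

variable {m n : ℕ} {w : ℕ → ℝ} (Δ : Discretization m n w)

theorem wIsBlowup {G : RGraph r} (hG : G.n = m) (hw : IsWeight G w) :
    WIsBlowup G w (G.comap Δ.N Δ.ψ) Δ.ρ := by
  subst hG
  refine ⟨⟨Δ.ρ_nonneg, Δ.ρ_eq_zero, ?_⟩, Δ.ψ, isBlowupMap_comap Δ.ψ_lt,
    fun v hv => (Δ.sum_fiber_ρ v hv).symm⟩
  rw [comap_n, ← sum_fiberwise_of_maps_to (t := range G.n)
    fun k hk => mem_range.2 (Δ.ψ_lt k (mem_range.1 hk))]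
  rw [sum_congr rfl fun v hv => Δ.sum_fiber_ρ v (mem_range.1 hv), hw.2.2]

theorem card_comap_edges_le (hw : ∀ v, 0 ≤ w v ∧ w v ≤ 1) {D : RGraph r} (hD : D.n = m)
    (hn : 0 < n) : (#(D.comap Δ.N Δ.ψ).edges : ℝ) ≤ (lamW D w + #D.edges * r / n) * Δ.N ^ r := by
  subst hD
  have hn' : (0 : ℝ) < n := by exact_mod_cast hn
  have hN : (n : ℝ) ≤ Δ.N := by exact_mod_cast Δ.le_N
  set κ : ℕ → ℝ := fun v => #{k ∈ range Δ.N | Δ.ψ k = v} / Δ.N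
  have hκ : ∀ v < D.n, 0 ≤ κ v ∧ κ v ≤ 1 := fun v _ =>
    ⟨by positivity, div_le_one_of_le₀ (by simpa using card_filter_le (range Δ.N) _)
      (by positivity)⟩
  have hκw : ∀ v < D.n, κ v ≤ w v + (n : ℝ)⁻¹ := fun v hv => by
    have := Δ.card_fiber_le v hv
    calc κ v ≤ (w v * n + 1) / n := div_le_div₀ (by linarith [hw v]) this hn' hN
      _ = w v + (n : ℝ)⁻¹ := by field_simp
  have hcard := (isBlowupMap_comap (F := D) Δ.ψ_lt).card_edges
  calc (#(D.comap Δ.N Δ.ψ).edges : ℝ) = lamW D fun v => (Δ.N : ℝ) * κ v := by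
        rw [hcard, comap_n]
        exact congrArg _ (funext fun v => (mul_div_cancel₀ _ (hn'.trans_le hN).ne').symm)
    _ = Δ.N ^ r * lamW D κ := lamW_const_mul D _ κ
    _ ≤ Δ.N ^ r * (lamW D w + #D.edges * r * (n : ℝ)⁻¹) := by
        gcongr
        exact lamW_le_lamW_add D (by positivity) hκ (fun v _ => hw v) hκw
    _ = (lamW D w + #D.edges * r / n) * Δ.N ^ r := by ring

end Discretization

theorem lamW_add_mul_wDistFam_le {𝔥 : Set (RGraph r)} {F G : RGraph r} {μ ρ : ℕ → ℝ} {α t : ℝ}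
    (hα : 0 ≤ α) (hw : WIsBlowup F μ G ρ) (hρ : ∀ v, ρ v ≤ t)
    (hd : wDistFam 𝔥 F μ ≤ t ^ r * distFam 𝔥 G)
    (hG : (#G.edges : ℝ) ≤ mFam 𝔥 G.n - α * distFam 𝔥 G) :
    lamW F μ + α * wDistFam 𝔥 F μ ≤ lamFam 𝔥 * (G.n * t) ^ r := by
  have ht : 0 ≤ t := (hw.1.1 0).trans (hρ 0)
  have hlam : lamW F μ ≤ #G.edges * t ^ r := hw.lamW_eq ▸ lamW_le_card_mul_pow G hw.1.1 hρ
  calc lamW F μ + α * wDistFam 𝔥 F μ ≤ t ^ r * (#G.edges + α * distFam 𝔥 G) := by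
        nlinarith [mul_le_mul_of_nonneg_left hd hα]
    _ ≤ t ^ r * mFam 𝔥 G.n := by gcongr; linarith
    _ ≤ t ^ r * (lamFam 𝔥 * G.n ^ r) := by
        gcongr; exact mFam_le_lamFam_mul_pow 𝔥 hw.1.n_pos
    _ = lamFam 𝔥 * (G.n * t) ^ r := by ring

theorem le_of_eventually_le_mul_pow {x a : ℝ} (m k : ℕ)
    (h : ∀ᶠ n : ℕ in atTop, x ≤ a * (((n : ℝ) + m) / n) ^ k) : x ≤ a := by
  have hlim : Tendsto (fun n : ℕ => ((n : ℝ) + m) / n) atTop (nhds 1) := by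
    simpa using (tendsto_natCast_div_add_atTop (m : ℝ)).inv₀ one_ne_zero
  simpa using ge_of_tendsto ((hlim.pow k).const_mul a) h

theorem lamW_add_le_lamFam_of_mem {𝔉 𝔥 : Set (RGraph r)} (hF : Clonable 𝔉) (hH : Clonable 𝔥)
    {ε α : ℝ} (hε : 0 < ε) (hα : 0 ≤ α) (hstab : LocallyStable 𝔉 𝔥 ε α) {F : RGraph r}
    (hF𝔉 : F ∈ 𝔉) {μ : ℕ → ℝ} (hμ : IsWeight F μ) (hd : wDistFam 𝔥 F μ ≤ ε / 2)
    {H₀ : RGraph r} (hH₀ : H₀ ∈ 𝔥) (hH₀n : 0 < H₀.n) :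
    lamW F μ + α * wDistFam 𝔥 F μ ≤ lamFam 𝔥 := by
  obtain ⟨n₀, hstab⟩ := hstab
  obtain ⟨H, hH𝔥, ν, G₁, G₂, w, hn, hw₁, hw₂, hd'⟩ :=
    exists_dPrime_lt_wDistFam_add hμ hH₀ (isWeight_uniformW hH₀n) (by positivity : 0 < ε / 4)
  set D := G₁.symmDiff G₂
  have hsmall : ∀ᶠ n : ℕ in atTop, (#D.edges * r : ℝ) / n < ε / 4 :=
    (tendsto_order.1 (tendsto_const_div_atTop_nhds_zero_nat _)).2 _ (by positivity)
  refine le_of_eventually_le_mul_pow G₁.n r ?_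
  filter_upwards [eventually_ge_atTop (max n₀ 1), hsmall] with n hn₀ hsmall
  have hn₁ : 0 < n := (le_max_right _ _).trans hn₀
  obtain ⟨Δ⟩ := Discretization.nonempty hw₁.1.1 hw₁.1.2.2 hn₁
  have hw₁' := hw₁.trans (Δ.wIsBlowup rfl hw₁.1)
  have hG₂' : G₂.comap Δ.N Δ.ψ ∈ 𝔥 := hH H hH𝔥 _ (hw₂.trans (Δ.wIsBlowup hn.symm hw₂.1)).isBlowup
  have hdist : distFam 𝔥 (G₁.comap Δ.N Δ.ψ) ≤ ε * (G₁.comap Δ.N Δ.ψ).n ^ r :=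
    calc distFam 𝔥 (G₁.comap Δ.N Δ.ψ) ≤ #(D.comap Δ.N Δ.ψ).edges := by
          rw [comap_symmDiff]; exact distFam_le_card_symmDiff hG₂' rfl
      _ ≤ (lamW D w + #D.edges * r / n) * Δ.N ^ r :=
          Δ.card_comap_edges_le (fun v => ⟨hw₁.1.1 v, hw₁.1.le_one v⟩)
            (by simp [D, RGraph.symmDiff, hn]) hn₁
      _ ≤ ε * Δ.N ^ r := by gcongr; change dPrime G₁.edges G₂.edges w + _ ≤ _; linarith
  have hN : (Δ.N : ℝ) * (n : ℝ)⁻¹ ≤ ((n : ℝ) + G₁.n) / n := by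
    rw [← div_eq_mul_inv]; gcongr; exact_mod_cast Δ.N_le
  calc lamW F μ + α * wDistFam 𝔥 F μ ≤ lamFam 𝔥 * (Δ.N * (n : ℝ)⁻¹) ^ r :=
        lamW_add_mul_wDistFam_le hα hw₁' Δ.ρ_le
          (wDistFam_le_pow_mul_distFam hw₁' Δ.ρ_le ⟨_, hG₂', rfl⟩)
          (hstab _ (hF F hF𝔉 _ hw₁'.isBlowup) ((le_max_left _ _).trans (hn₀.trans Δ.le_N)) hdist)
    _ ≤ lamFam 𝔥 * (((n : ℝ) + G₁.n) / n) ^ r := by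
        gcongr
        exact lamFam_nonneg 𝔥

theorem lamW_add_le_lamFam_of_forall_n_eq_zero {𝔉 𝔥 : Set (RGraph r)} (hF : Clonable 𝔉)
    {ε α : ℝ} (hε : 0 ≤ ε) (hα : 0 ≤ α) (hstab : LocallyStable 𝔉 𝔥 ε α) {F : RGraph r}
    (hF𝔉 : F ∈ 𝔉) {μ : ℕ → ℝ} (hμ : IsWeight F μ) (h𝔥 : ∀ H ∈ 𝔥, H.n = 0) :
    lamW F μ + α * wDistFam 𝔥 F μ ≤ lamFam 𝔥 := by
  obtain ⟨n₀, hstab⟩ := hstab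
  have hno : ∀ H ∈ 𝔥, ∀ ν, ¬ IsWeight H ν := fun H hH _ hν => hν.n_pos.ne' (h𝔥 H hH)
  have hlam : lamFam 𝔥 = 0 := by
    rw [lamFam]
    convert Real.sSup_empty
    exact Set.eq_empty_of_forall_notMem fun _ ⟨H, hH, ν, hν, _⟩ => hno H hH ν hν
  have hd : wDistFam 𝔥 F μ = 0 := by
    rw [wDistFam]
    convert Real.sInf_empty
    exact Set.eq_empty_of_forall_notMem fun _ ⟨H, hH, ν, hν, _⟩ => hno H hH ν hν
  obtain ⟨Δ⟩ := Discretization.nonempty hμ.1 hμ.2.2 n₀.succ_pos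
  have hw := Δ.wIsBlowup rfl hμ
  have hdist : distFam 𝔥 (F.comap Δ.N Δ.ψ) = 0 := by
    rw [distFam]
    convert Real.sInf_empty
    exact Set.eq_empty_of_forall_notMem fun _ ⟨H, hH, hn, _⟩ => hw.1.n_pos.ne' (hn ▸ h𝔥 H hH)
  have := lamW_add_mul_wDistFam_le hα hw Δ.ρ_le (by rw [hd, hdist, mul_zero])
    (hstab _ (hF F hF𝔉 _ hw.isBlowup) (n₀.le_succ.trans Δ.le_N) (by rw [hdist]; positivity))
  rw [hlam, zero_mul] at this
  rwa [hlam]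

/-- If `𝔉` and `𝔥` are clonable and `𝔉` is `𝔥`-locally stable, then `𝔉` is
`𝔥`-weight locally stable. -/
theorem weightLocallyStable_of_locallyStable {r : ℕ} (𝔉 𝔥 : Set (RGraph r))
    (hF : Clonable 𝔉) (hH : Clonable 𝔥) (h : HLocallyStable 𝔉 𝔥) :
    HWeightLocallyStable 𝔉 𝔥 := by
  obtain ⟨ε, hε, α, hα, hstab⟩ := h
  refine ⟨ε / 2, half_pos hε, α, hα, fun F hF𝔉 μ hμ hd => le_sub_iff_add_le.2 ?_⟩
  by_cases h𝔥 : ∃ H ∈ 𝔥, 0 < H.n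
  · obtain ⟨H₀, hH₀, hH₀n⟩ := h𝔥
    exact lamW_add_le_lamFam_of_mem hF hH hε hα.le hstab hF𝔉 hμ hd hH₀ hH₀n
  · push Not at h𝔥
    exact lamW_add_le_lamFam_of_forall_n_eq_zero hF hε.le hα.le hstab hF𝔉 hμ fun H hH =>
      Nat.le_zero.1 (h𝔥 H hH)

end TuranGT
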